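/- Let H be a Hopf algebra over ℂ with a regular antipode, witnessed by a group-like element a ∈ H, an algebra homomorphism Φ : H → ℂ with convolution inverse Φ⁻¹ = Φ∘S, and an integer m ≥ 1 with S^{2m}(x) = a·((Φ * id_H * Φ⁻¹)(x))·a⁻¹ for all x ∈ H. If J is a Hopf ideal of H such that Φ(J) = 0 and Φ(S(J)) = 0 (i.e. Φ⁻¹(J) = 0), then S(J) = J. -/

import Mathlib

open scoped TensorProduct

section Defs

variable {H : Type*} [Ring H] [HopfAlgebra ℂ H]

/-- The subspace `P ⊗ Q` of `H ⊗ H`. -/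
noncomputable def subTensor (P Q : Submodule ℂ H) : Submodule ℂ (H ⊗[ℂ] H) :=
  LinearMap.range (TensorProduct.map P.subtype Q.subtype)

/-- A two-sided ideal (as a `ℂ`-subspace closed under left and right multiplication). -/
structure IsTwoSidedIdealSub (I : Submodule ℂ H) : Prop where
  mul_mem_left : ∀ (x : H) ⦃a : H⦄, a ∈ I → x * a ∈ I
  mul_mem_right : ∀ ⦃a : H⦄ (x : H), a ∈ I → a * x ∈ I

/-- A Hopf ideal: a two-sided ideal `I` with `ε(I) = 0`, `Δ(I) ⊆ I⊗H + H⊗I` and `S(I) ⊆ I`. -/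
structure IsHopfIdeal (I : Submodule ℂ H) extends IsTwoSidedIdealSub I : Prop where
  counit_eq_zero : ∀ a ∈ I, Coalgebra.counit (R := ℂ) a = 0
  comul_mem : ∀ a ∈ I, Coalgebra.comul (R := ℂ) a ∈ subTensor I ⊤ ⊔ subTensor ⊤ I
  antipode_mem : ∀ a ∈ I, HopfAlgebra.antipode (R := ℂ) a ∈ I

/-- Inner faithfulness of an algebra representation: the kernel contains no nonzero Hopf ideal. -/
def InnerFaithful {A : Type*} [Semiring A] [Algebra ℂ A] (π : H →ₐ[ℂ] A) : Prop :=
  ∀ J : Submodule ℂ H, IsHopfIdeal J → (∀ x ∈ J, π x = 0) → J = ⊥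

/-- Inner linearity: there is a two-sided ideal of finite codimension containing no nonzero
Hopf ideal. -/
def InnerLinear (H : Type*) [Ring H] [HopfAlgebra ℂ H] : Prop :=
  ∃ I : Submodule ℂ H, IsTwoSidedIdealSub I ∧ FiniteDimensional ℂ (H ⧸ I) ∧
    ∀ J : Submodule ℂ H, IsHopfIdeal J → J ≤ I → J = ⊥

end Defs

section Regular

variable {H : Type*} [Ring H] [HopfAlgebra ℂ H]

/-- `x ↦ Σ φ(x₍₁₎) x₍₂₎`. -/
noncomputable def lconv (φ : H →ₗ[ℂ] ℂ) : H →ₗ[ℂ] H :=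
  (TensorProduct.lid ℂ H).toLinearMap ∘ₗ TensorProduct.map φ LinearMap.id ∘ₗ
    Coalgebra.comul (R := ℂ)

/-- `x ↦ Σ x₍₁₎ ψ(x₍₂₎)`. -/
noncomputable def rconv (ψ : H →ₗ[ℂ] ℂ) : H →ₗ[ℂ] H :=
  (TensorProduct.rid ℂ H).toLinearMap ∘ₗ TensorProduct.map LinearMap.id ψ ∘ₗ
    Coalgebra.comul (R := ℂ)

/-- The convolution `Φ * id_H * Φ⁻¹ : x ↦ Σ Φ(x₍₁₎) x₍₂₎ Φ⁻¹(x₍₃₎)`, with `Φ⁻¹ = Φ ∘ S`. -/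
noncomputable def convConj (Φ : H →ₐ[ℂ] ℂ) : H →ₗ[ℂ] H :=
  rconv (Φ.toLinearMap ∘ₗ HopfAlgebra.antipode (R := ℂ)) ∘ₗ lconv Φ.toLinearMap

/-- A group-like element: `Δ(a) = a ⊗ a` and `ε(a) = 1`. -/
def IsGroupLikeElemC (a : H) : Prop :=
  Coalgebra.comul (R := ℂ) a = a ⊗ₜ[ℂ] a ∧ Coalgebra.counit (R := ℂ) a = 1

end Regular

/-! The operator `Φ * id * Φ⁻¹` is invertible, with inverse `Φ⁻¹ * id * Φ`, because left and right
convolution by functionals commute with each other and compose like the convolution product.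
Since `Φ` and `Φ⁻¹` vanish on the coideal `J`, these operators and conjugation by `a` preserve `J`.
So every `x ∈ J` is `S^{2m} y` with `y = (Φ⁻¹ * id * Φ)(a⁻¹ x a) ∈ J`, and `x = S (S^{2m-1} y)`. -/

open Coalgebra HopfAlgebra TensorProduct WithConv LinearMap

section Convolution

variable {H : Type*} [Ring H] [HopfAlgebra ℂ H]

theorem comul_comp_lconv (φ : H →ₗ[ℂ] ℂ) :
    comul ∘ₗ lconv φ = (lconv φ).rTensor H ∘ₗ comul (R := ℂ) := by
  have hnat : comul ∘ₗ (TensorProduct.lid ℂ H).toLinearMap ∘ₗ map φ LinearMap.id =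
      (TensorProduct.lid ℂ (H ⊗[ℂ] H)).toLinearMap ∘ₗ map φ LinearMap.id ∘ₗ
        (comul (R := ℂ) (A := H)).lTensor H := by
    ext; simp
  have hassoc : (TensorProduct.lid ℂ (H ⊗[ℂ] H)).toLinearMap ∘ₗ map φ LinearMap.id ∘ₗ
        (TensorProduct.assoc ℂ H H H).toLinearMap =
      ((TensorProduct.lid ℂ H).toLinearMap ∘ₗ map φ LinearMap.id).rTensor H := by
    ext; simp [smul_tmul']
  calc comul ∘ₗ lconv φ
      = (TensorProduct.lid ℂ (H ⊗[ℂ] H)).toLinearMap ∘ₗ map φ LinearMap.id ∘ₗ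
          comul.lTensor H ∘ₗ comul := by
        simp only [lconv, ← comp_assoc, hnat]
    _ = (lconv φ).rTensor H ∘ₗ comul := by
        rw [← coassoc]
        simp only [← comp_assoc, hassoc]
        simp only [lconv, rTensor_comp, comp_assoc]

theorem comul_comp_rconv (φ : H →ₗ[ℂ] ℂ) :
    comul ∘ₗ rconv φ = (rconv φ).lTensor H ∘ₗ comul (R := ℂ) := by
  have hnat : comul ∘ₗ (TensorProduct.rid ℂ H).toLinearMap ∘ₗ map LinearMap.id φ =
      (TensorProduct.rid ℂ (H ⊗[ℂ] H)).toLinearMap ∘ₗ map LinearMap.id φ ∘ₗ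
        (comul (R := ℂ) (A := H)).rTensor H := by
    ext; simp
  have hassoc : (TensorProduct.rid ℂ (H ⊗[ℂ] H)).toLinearMap ∘ₗ map LinearMap.id φ ∘ₗ
        (TensorProduct.assoc ℂ H H H).symm.toLinearMap =
      ((TensorProduct.rid ℂ H).toLinearMap ∘ₗ map LinearMap.id φ).lTensor H := by
    ext; simp [tmul_smul]
  calc comul ∘ₗ rconv φ
      = (TensorProduct.rid ℂ (H ⊗[ℂ] H)).toLinearMap ∘ₗ map LinearMap.id φ ∘ₗ
          comul.rTensor H ∘ₗ comul := by
        simp only [rconv, ← comp_assoc, hnat]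
    _ = (rconv φ).lTensor H ∘ₗ comul := by
        rw [← coassoc_symm]
        simp only [← comp_assoc, hassoc]
        simp only [rconv, lTensor_comp, comp_assoc]

theorem lconv_comp_lconv (φ ψ : H →ₗ[ℂ] ℂ) :
    lconv φ ∘ₗ lconv ψ = lconv (toConv ψ * toConv φ).ofConv := by
  have hconv : φ ∘ₗ lconv ψ = (toConv ψ * toConv φ).ofConv := by
    have : φ ∘ₗ (TensorProduct.lid ℂ H).toLinearMap ∘ₗ map ψ LinearMap.id =
        mul' ℂ ℂ ∘ₗ map ψ φ := by
      ext; simp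
    simp only [lconv, LinearMap.convMul_def, ← comp_assoc, this]
  calc lconv φ ∘ₗ lconv ψ
      = (TensorProduct.lid ℂ H).toLinearMap ∘ₗ map φ LinearMap.id ∘ₗ
          (lconv ψ).rTensor H ∘ₗ comul := by
        rw [lconv, comp_assoc, comp_assoc, comul_comp_lconv]
    _ = lconv (toConv ψ * toConv φ).ofConv := by
        rw [rTensor, ← comp_assoc (h := map φ LinearMap.id), ← map_comp, comp_id, ← hconv]
        rfl

theorem rconv_comp_rconv (φ ψ : H →ₗ[ℂ] ℂ) :
    rconv φ ∘ₗ rconv ψ = rconv (toConv φ * toConv ψ).ofConv := by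
  have hconv : φ ∘ₗ rconv ψ = (toConv φ * toConv ψ).ofConv := by
    have : φ ∘ₗ (TensorProduct.rid ℂ H).toLinearMap ∘ₗ map LinearMap.id ψ =
        mul' ℂ ℂ ∘ₗ map φ ψ := by
      ext; simp [mul_comm]
    simp only [rconv, LinearMap.convMul_def, ← comp_assoc, this]
  calc rconv φ ∘ₗ rconv ψ
      = (TensorProduct.rid ℂ H).toLinearMap ∘ₗ map LinearMap.id φ ∘ₗ
          (rconv ψ).lTensor H ∘ₗ comul := by
        rw [rconv, comp_assoc, comp_assoc, comul_comp_rconv]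
    _ = rconv (toConv φ * toConv ψ).ofConv := by
        rw [lTensor, ← comp_assoc (h := map LinearMap.id φ), ← map_comp, comp_id, ← hconv]
        rfl

theorem rconv_comp_lconv (φ ψ : H →ₗ[ℂ] ℂ) :
    rconv φ ∘ₗ lconv ψ = lconv ψ ∘ₗ rconv φ := by
  have hnat : (TensorProduct.rid ℂ H).toLinearMap ∘ₗ map LinearMap.id φ ∘ₗ (lconv ψ).rTensor H =
      lconv ψ ∘ₗ (TensorProduct.rid ℂ H).toLinearMap ∘ₗ map LinearMap.id φ := by
    ext; simp
  calc rconv φ ∘ₗ lconv ψ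
      = ((TensorProduct.rid ℂ H).toLinearMap ∘ₗ map LinearMap.id φ ∘ₗ (lconv ψ).rTensor H) ∘ₗ
          comul := by
        rw [rconv, comp_assoc, comp_assoc, comul_comp_lconv]
        simp only [comp_assoc]
    _ = lconv ψ ∘ₗ rconv φ := by
        rw [hnat]
        simp only [rconv, comp_assoc]

theorem lconv_one : lconv (1 : WithConv (H →ₗ[ℂ] ℂ)).ofConv = LinearMap.id := by
  ext x
  simp [lconv, LinearMap.convOne_def, ← rTensor_def]

theorem rconv_one : rconv (1 : WithConv (H →ₗ[ℂ] ℂ)).ofConv = LinearMap.id := by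
  ext x
  simp [rconv, LinearMap.convOne_def, ← lTensor_def]

theorem algHom_comp_antipode_mul_self (Φ : H →ₐ[ℂ] ℂ) :
    toConv (Φ.toLinearMap ∘ₗ antipode ℂ) * toConv Φ.toLinearMap = 1 := by
  have h := algHom_comp_convMul_distrib Φ (toConv (antipode ℂ)) (toConv LinearMap.id)
  rw [antipode_mul_id, algHom_comp_convOne] at h
  exact ofConv_injective h.symm

theorem convConj_comp_rconv_comp_lconv (Φ : H →ₐ[ℂ] ℂ) :
    convConj Φ ∘ₗ rconv Φ.toLinearMap ∘ₗ lconv (Φ.toLinearMap ∘ₗ antipode ℂ) = LinearMap.id := by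
  calc convConj Φ ∘ₗ rconv Φ.toLinearMap ∘ₗ lconv (Φ.toLinearMap ∘ₗ antipode ℂ)
      = (rconv (Φ.toLinearMap ∘ₗ antipode ℂ) ∘ₗ rconv Φ.toLinearMap) ∘ₗ
          (lconv Φ.toLinearMap ∘ₗ lconv (Φ.toLinearMap ∘ₗ antipode ℂ)) := by
        simp only [convConj, comp_assoc]
        congr 1
        rw [← comp_assoc, ← comp_assoc, rconv_comp_lconv]
    _ = LinearMap.id := by
        rw [rconv_comp_rconv, lconv_comp_lconv, algHom_comp_antipode_mul_self, rconv_one, lconv_one,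
          comp_id]

end Convolution

section HopfIdeal

variable {H : Type*} [Ring H] [HopfAlgebra ℂ H]

theorem subTensor_eq_map₂ (P Q : Submodule ℂ H) :
    subTensor P Q = Submodule.map₂ (TensorProduct.mk ℂ H H) P Q :=
  range_mapIncl P Q

variable {J : Submodule ℂ H}

theorem lconv_mem (hJ : ∀ x ∈ J, comul (R := ℂ) x ∈ subTensor J ⊤ ⊔ subTensor ⊤ J)
    {φ : H →ₗ[ℂ] ℂ} (hφ : ∀ x ∈ J, φ x = 0) {x : H} (hx : x ∈ J) :
    lconv φ x ∈ J := by
  suffices subTensor J ⊤ ⊔ subTensor ⊤ J ≤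
      J.comap ((TensorProduct.lid ℂ H).toLinearMap ∘ₗ map φ LinearMap.id) from this (hJ x hx)
  simp only [subTensor_eq_map₂, sup_le_iff, Submodule.map₂_le]
  exact ⟨fun p hp q _ => by simp [hφ p hp], fun p _ q hq => by simpa using J.smul_mem _ hq⟩

theorem rconv_mem (hJ : ∀ x ∈ J, comul (R := ℂ) x ∈ subTensor J ⊤ ⊔ subTensor ⊤ J)
    {φ : H →ₗ[ℂ] ℂ} (hφ : ∀ x ∈ J, φ x = 0) {x : H} (hx : x ∈ J) :
    rconv φ x ∈ J := by
  suffices subTensor J ⊤ ⊔ subTensor ⊤ J ≤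
      J.comap ((TensorProduct.rid ℂ H).toLinearMap ∘ₗ map LinearMap.id φ) from this (hJ x hx)
  simp only [subTensor_eq_map₂, sup_le_iff, Submodule.map₂_le]
  exact ⟨fun p hp q _ => by simpa using J.smul_mem _ hp, fun p _ q hq => by simp [hφ q hq]⟩

end HopfIdeal

theorem IsGroupLikeElemC.mul_antipode {H : Type*} [Ring H] [HopfAlgebra ℂ H] {a : H}
    (ha : IsGroupLikeElemC a) : a * antipode ℂ a = 1 :=
  (IsGroupLikeElem.mk ha.2 ha.1).mul_antipode_cancel

theorem stmt11 (H : Type*) [Ring H] [HopfAlgebra ℂ H]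
    (a : H) (Φ : H →ₐ[ℂ] ℂ) (m : ℕ) (hm : 1 ≤ m) (ha : IsGroupLikeElemC a)
    (hreg : ∀ x : H, (⇑(HopfAlgebra.antipode (R := ℂ) (A := H)))^[2 * m] x =
      a * convConj Φ x * HopfAlgebra.antipode (R := ℂ) a)
    (J : Submodule ℂ H) (hJ : IsHopfIdeal J)
    (hΦJ : ∀ x ∈ J, Φ x = 0)
    (hΦSJ : ∀ x ∈ J, Φ (HopfAlgebra.antipode (R := ℂ) x) = 0) :
    Submodule.map (HopfAlgebra.antipode (R := ℂ)) J = J := by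
  refine le_antisymm (Submodule.map_le_iff_le_comap.2 fun x hx => hJ.antipode_mem x hx)
    fun x hx => ?_
  set z := antipode ℂ a * x * a
  set y := rconv Φ.toLinearMap (lconv (Φ.toLinearMap ∘ₗ antipode ℂ) z)
  have hy : y ∈ J := rconv_mem hJ.comul_mem hΦJ <|
    lconv_mem hJ.comul_mem hΦSJ (hJ.mul_mem_right a (hJ.mul_mem_left _ hx))
  have hconv : convConj Φ y = z := congr($(convConj_comp_rconv_comp_lconv Φ) z)
  have hSy : (antipode ℂ)^[2 * m] y = x := by
    rw [hreg, hconv, ← mul_assoc, ← mul_assoc, ha.mul_antipode, one_mul, mul_assoc,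
      ha.mul_antipode, mul_one]
  obtain ⟨n, hn⟩ : ∃ n, 2 * m = n + 1 := ⟨2 * m - 1, by omega⟩
  rw [hn, Function.iterate_succ_apply'] at hSy
  exact ⟨_, Set.MapsTo.iterate (fun _ h => hJ.antipode_mem _ h) n hy, hSy⟩
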